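/- arXiv:2003.06267 — 5 statements merged into one kernel-verified Lean document; each statement's English description precedes it below -/
import Mathlib

section
/- For any causal realisation ρ of a family of configurations F there exist an extremal realisation ρ' of F and a total map of realisations f : ρ → ρ'. -/
universe u v w

/-- The image of a set under a partial function. -/
def pimage {α : Type u} {β : Type v} (f : α → Option β) (x : Set α) : Set β :=
  {b | ∃ a ∈ x, f a = some b}

/-- A family of configurations over the set of events `A`:
a non-empty family of subsets, whose underlying set is all of `A`,
closed under unions of finitely compatible subfamilies,
and satisfying the securing-chain condition. -/
structure ConfigFamily (A : Type u) where
  F : Set (Set A)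
  nonempty : F.Nonempty
  covers : ∀ a : A, ∃ x ∈ F, a ∈ x
  unionClosed : ∀ X ⊆ F, (∀ Y ⊆ X, Y.Finite → ∃ z ∈ F, ∀ y ∈ Y, y ⊆ z) → ⋃₀ X ∈ F
  secured : ∀ x ∈ F, ∀ e ∈ x, ∃ l : List A, l ≠ [] ∧ l.getLast? = some e ∧
    (∀ a ∈ l, a ∈ x) ∧ ∀ i, 0 < i → i ≤ l.length → {a | a ∈ l.take i} ∈ F

/-- A causal realisation of the family `C`: a partial order whose
principal lower sets are finite, together with a function to events
sending every down-closed subset to a configuration of the family. -/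
structure Realisation {A : Type u} (C : ConfigFamily A) where
  carrier : Type u
  le : carrier → carrier → Prop
  le_refl : ∀ a, le a a
  le_trans : ∀ a b c, le a b → le b c → le a c
  le_antisymm : ∀ a b, le a b → le b a → a = b
  finPast : ∀ e, {e' | le e' e}.Finite
  ρ : carrier → A
  real : ∀ x : Set carrier, (∀ a ∈ x, ∀ b, le b a → b ∈ x) → ρ '' x ∈ C.F

namespace Realisation

variable {A : Type u} {C : ConfigFamily A}

/-- Down-closed subsets of the carrier of a realisation. -/
def IsDown (r : Realisation C) (x : Set r.carrier) : Prop :=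
  ∀ a ∈ x, ∀ b, r.le b a → b ∈ x

/-- The set `[a) = [a] \ {a}` of strict predecessors. -/
def spred (r : Realisation C) (a : r.carrier) : Set r.carrier :=
  {b | r.le b a ∧ b ≠ a}

/-- The carrier has a top element. -/
def HasTop (r : Realisation C) : Prop := ∃ t, ∀ a, r.le a t

end Realisation

/-- A map of realisations: a partial surjective function between the carriers,
preserving down-closed subsets and commuting with the functions to events. -/
structure RealMap {A : Type u} {C : ConfigFamily A} (r r' : Realisation C) where
  f : r.carrier → Option r'.carrier
  surj : ∀ b, ∃ a, f a = some b
  presDown : ∀ x, r.IsDown x → r'.IsDown (pimage f x)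
  commutes : ∀ a b, f a = some b → r.ρ a = r'.ρ b

namespace RealMap

variable {A : Type u} {C : ConfigFamily A} {r r' r₀ : Realisation C}

/-- The map is total. -/
def IsTotal (m : RealMap r r') : Prop := ∀ a, ∃ b, m.f a = some b

/-- The map is an isomorphism of realisations: it has an inverse map of
realisations, given by the inverse relation. -/
def IsIso (m : RealMap r r') : Prop :=
  ∃ m' : RealMap r' r, ∀ a b, m.f a = some b ↔ m'.f b = some a

/-- `m : r → r₀` is a projection witnessed by `g`: `g` realises the carrier of
`r₀` as a subset of the carrier of `r` with the restricted order and restricted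
function to events, and `m` is the inverse relation of this inclusion. -/
def IsProjectionVia (m : RealMap r r₀) (g : r₀.carrier → r.carrier) : Prop :=
  Function.Injective g ∧ (∀ a b, r₀.le a b ↔ r.le (g a) (g b)) ∧
    (∀ a, r₀.ρ a = r.ρ (g a)) ∧ (∀ a b, m.f a = some b ↔ g b = a)

/-- `m` is a projection. -/
def IsProjection (m : RealMap r r₀) : Prop := ∃ g, m.IsProjectionVia g

end RealMap

/-- A realisation is extremal when every total map of realisations from it
is an isomorphism. -/
def Realisation.Extremal {A : Type u} {C : ConfigFamily A} (r : Realisation C) : Prop :=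
  ∀ (r' : Realisation C) (m : RealMap r r'), m.IsTotal → m.IsIso

/-- A prime extremal realisation: extremal with a top element. -/
def Realisation.PrimeExtremal {A : Type u} {C : ConfigFamily A} (r : Realisation C) : Prop :=
  r.Extremal ∧ r.HasTop

/-- Isomorphism of realisations. -/
def RealIso {A : Type u} {C : ConfigFamily A} (r r' : Realisation C) : Prop :=
  ∃ m : RealMap r r', m.IsIso

/-- `m` is the composite of `m₁` followed by `m₂` (as partial functions). -/
def CompEq {A : Type u} {C : ConfigFamily A} {r r' r'' : Realisation C}
    (m₁ : RealMap r r') (m₂ : RealMap r' r'') (m : RealMap r r'') : Prop :=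
  ∀ a c, m.f a = some c ↔ ∃ b, m₁.f a = some b ∧ m₂.f b = some c

/-! A total map out of a realisation `r` is determined, up to isomorphism, by the preorder it
induces on the carrier of `r`. Call such preorders coarsenings and order them by factorisation of
the corresponding quotient maps; a maximal coarsening, provided by Zorn's lemma, has an extremal
quotient. A chain of coarsenings is bounded by its eventual preorder. The latter is again a
coarsening because the number of classes below a fixed element can only decrease along the chain,
and once that number is stable the order below the element no longer changes. -/

open Filter Function

lemma pimage_eq_image {α β : Type*} {f : α → Option β} {g : α → β} (hg : ∀ a, f a = some (g a))
    (x : Set α) : pimage f x = g '' x := by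
  ext b
  simp [pimage, hg]

namespace RealMap

variable {A : Type u} {C : ConfigFamily A} {r r' : Realisation C}

lemma isIso_of_injective_of_monotone (m : RealMap r r')
    {g : r.carrier → r'.carrier} (hg : ∀ a, m.f a = some (g a)) (hinj : Injective g)
    (hmono : ∀ a b, r.le a b → r'.le (g a) (g b)) : m.IsIso := by
  have hsurj : Surjective g := fun b =>
    (m.surj b).imp fun a ha => Option.some.inj ((hg a).symm.trans ha)
  set e := Equiv.ofBijective g ⟨hinj, hsurj⟩
  refine ⟨⟨fun b => some (e.symm b), fun a => ⟨g a, congrArg some (e.symm_apply_apply a)⟩,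
    fun y hy => ?_, fun b a hba => ?_⟩, fun a b => ?_⟩
  · rw [pimage_eq_image fun _ => rfl]
    rintro _ ⟨b, hb, rfl⟩ a ha
    refine ⟨g a, hy b hb (g a) ?_, e.symm_apply_apply a⟩
    have hb : g (e.symm b) = b := e.apply_symm_apply b
    exact hb ▸ hmono _ _ ha
  · cases Option.some.inj hba
    exact (m.commutes _ _ ((hg _).trans (congrArg some (e.apply_symm_apply b)))).symm
  · rw [hg, Option.some_inj, Option.some_inj, Equiv.symm_apply_eq]
    exact eq_comm

end RealMap

namespace Realisation

variable {A : Type u} {C : ConfigFamily A} {r : Realisation C}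

/-- The preorder induced on the carrier of `r` by a total map of realisations out of `r`;
`exists_le_antisymmRel` says that the quotient map preserves down-closed sets. -/
structure Coarsening (r : Realisation C) where
  R : r.carrier → r.carrier → Prop
  refl : ∀ a, R a a
  trans : ∀ a b c, R a b → R b c → R a c
  rho_eq : ∀ a b, AntisymmRel R a b → r.ρ a = r.ρ b
  exists_le_antisymmRel : ∀ a b, R b a → ∃ x, r.le x a ∧ AntisymmRel R x b
  real : ∀ Y : Set r.carrier, (∀ a ∈ Y, ∀ b, R b a → b ∈ Y) → r.ρ '' Y ∈ C.F

namespace Coarsening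

instance (S : r.Coarsening) : IsPreorder r.carrier S.R where
  refl := S.refl
  trans := S.trans

/-- `S ≤ T` when the quotient map of `T` factors through that of `S` by a map of realisations. -/
instance : Preorder r.Coarsening where
  le S T := (∀ a b, AntisymmRel S.R a b → AntisymmRel T.R a b) ∧
    ∀ a b, T.R b a → ∃ x, S.R x a ∧ AntisymmRel T.R x b
  le_refl S := ⟨fun _ _ h => h, fun _ b h => ⟨b, h, .rfl⟩⟩
  le_trans S T U hST hTU := ⟨fun a b h => hTU.1 a b (hST.1 a b h), fun a b hba => by
    obtain ⟨y, hya, hyb⟩ := hTU.2 a b hba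
    obtain ⟨x, hxa, hxy⟩ := hST.2 a y hya
    exact ⟨x, hxa, (hTU.1 x y hxy).trans hyb⟩⟩

variable {S T : r.Coarsening} {a b x : r.carrier}

def cls (S : r.Coarsening) (a : r.carrier) : Set r.carrier := {b | AntisymmRel S.R a b}

lemma cls_eq_cls_iff : S.cls a = S.cls b ↔ AntisymmRel S.R a b := by
  refine ⟨fun h => ?_, fun h => Set.ext fun c => ⟨h.symm.trans, h.trans⟩⟩
  exact (h ▸ AntisymmRel.refl S.R b : b ∈ S.cls a)

/-- The past of the image of `a` in the quotient by `S`. -/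
def pastClasses (S : r.Coarsening) (a : r.carrier) : Set (Set r.carrier) :=
  S.cls '' {x | S.R x a}

lemma pastClasses_subset_image_cls (h : S ≤ T) (a : r.carrier) :
    T.pastClasses a ⊆ T.cls '' {x | S.R x a} := by
  rintro _ ⟨y, hya, rfl⟩
  obtain ⟨x, hxa, hxy⟩ := h.2 a y hya
  exact ⟨x, hxa, cls_eq_cls_iff.2 hxy⟩

lemma finite_pastClasses (S : r.Coarsening) (a : r.carrier) : (S.pastClasses a).Finite := by
  refine ((r.finPast a).image S.cls).subset ?_
  rintro _ ⟨y, hya, rfl⟩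
  obtain ⟨x, hxa, hxy⟩ := S.exists_le_antisymmRel a y hya
  exact ⟨x, hxa, cls_eq_cls_iff.2 hxy⟩

/-- Along `S ≤ T` a class of `T` is the saturation of a class of `S`. -/
lemma image_cls_eq_image_pastClasses (h : S ≤ T) (a : r.carrier) :
    T.cls '' {x | S.R x a} =
      (fun c => {z | ∃ y ∈ c, AntisymmRel T.R y z}) '' S.pastClasses a := by
  rw [pastClasses, Set.image_image]
  refine Set.image_congr fun x _ => Set.ext fun z => ⟨fun hz => ⟨x, .rfl, hz⟩, ?_⟩
  rintro ⟨y, hxy, hyz⟩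
  exact (h.1 x y hxy).trans hyz

lemma R_of_ncard_pastClasses_le (h : S ≤ T)
    (hcard : (S.pastClasses a).ncard ≤ (T.pastClasses a).ncard) (hxa : S.R x a) : T.R x a := by
  have hfin : (T.cls '' {x | S.R x a}).Finite := by
    rw [image_cls_eq_image_pastClasses h]
    exact (S.finite_pastClasses a).image _
  have hle : (T.cls '' {x | S.R x a}).ncard ≤ (T.pastClasses a).ncard := by
    rw [image_cls_eq_image_pastClasses h]
    exact (Set.ncard_image_le (S.finite_pastClasses a)).trans hcard
  have heq := Set.eq_of_subset_of_ncard_le (pastClasses_subset_image_cls h a) hle hfin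
  obtain ⟨y, hya, hyx⟩ : T.cls x ∈ T.pastClasses a := heq ▸ ⟨x, hxa, rfl⟩
  exact T.trans _ _ _ (cls_eq_cls_iff.1 hyx).2 hya

section Limit

variable {ι : Type*} [Preorder ι] {S : ι → r.Coarsening}

def limitRel (S : ι → r.Coarsening) (a b : r.carrier) : Prop := ∀ᶠ i in atTop, (S i).R a b

variable (hS : Monotone S)
include hS

lemma antisymmRel_limitRel (i : ι) (h : AntisymmRel (S i).R a b) :
    AntisymmRel (limitRel S) a b := by
  have hev : ∀ᶠ j in atTop, AntisymmRel (S j).R a b :=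
    (eventually_ge_atTop i).mono fun j hij => (hS hij).1 a b h
  exact ⟨hev.mono fun _ h => h.1, hev.mono fun _ h => h.2⟩

variable [IsDirectedOrder ι] [Nonempty ι]

lemma exists_lift_limitRel (i : ι) (h : limitRel S b a) :
    ∃ x, (S i).R x a ∧ AntisymmRel (limitRel S) x b := by
  obtain ⟨j, hij, hj⟩ := ((eventually_ge_atTop i).and h).exists
  obtain ⟨x, hxa, hxb⟩ := (hS hij).2 a b hj
  exact ⟨x, hxa, antisymmRel_limitRel hS j hxb⟩

omit hS in
lemma rho_eq_of_antisymmRel_limitRel (h : AntisymmRel (limitRel S) a b) : r.ρ a = r.ρ b := by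
  obtain ⟨i, hab, hba⟩ := (h.1.and h.2).exists
  exact (S i).rho_eq a b ⟨hab, hba⟩

lemma image_limitRel_subset (i : ι) (a : r.carrier) :
    r.ρ '' {x | limitRel S x a} ⊆ r.ρ '' {x | (S i).R x a} := by
  rintro _ ⟨x, hxa, rfl⟩
  obtain ⟨y, hya, hyx⟩ := exists_lift_limitRel hS i hxa
  exact ⟨y, hya, rho_eq_of_antisymmRel_limitRel hyx⟩

/-- The past of `a` in the limit is, up to `ρ`, its past in a member of the family with the fewest
classes below `a`. -/
lemma image_limitRel_mem (a : r.carrier) : r.ρ '' {x | limitRel S x a} ∈ C.F := by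
  set i := argmin fun i => ((S i).pastClasses a).ncard
  suffices r.ρ '' {x | limitRel S x a} = r.ρ '' {x | (S i).R x a} from
    this ▸ (S i).real _ fun _ hya _ hzy => (S i).trans _ _ _ hzy hya
  refine (image_limitRel_subset hS i a).antisymm (Set.image_mono fun x hxa => ?_)
  exact eventually_atTop.2 ⟨i, fun j hij =>
    R_of_ncard_pastClasses_le (hS hij) (argmin_le (fun i => ((S i).pastClasses a).ncard) j) hxa⟩

lemma real_limitRel (Y : Set r.carrier) (hY : ∀ a ∈ Y, ∀ b, limitRel S b a → b ∈ Y) :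
    r.ρ '' Y ∈ C.F := by
  obtain ⟨i⟩ := ‹Nonempty ι›
  have hunion := C.unionClosed ((fun a => r.ρ '' {x | limitRel S x a}) '' Y)
    (by rintro _ ⟨a, -, rfl⟩; exact image_limitRel_mem hS a) fun Z hZ _ => by
      refine ⟨r.ρ '' {x | ∃ a ∈ Y, (S i).R x a}, (S i).real _ ?_, ?_⟩
      · rintro y ⟨a, ha, hya⟩ z hzy
        exact ⟨a, ha, (S i).trans _ _ _ hzy hya⟩
      · intro z hz
        obtain ⟨a, ha, rfl⟩ := hZ hz
        exact (image_limitRel_subset hS i a).trans (Set.image_mono fun x hxa => ⟨a, ha, hxa⟩)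
  convert hunion using 1
  ext e
  simp only [Set.sUnion_image, Set.mem_iUnion, Set.mem_image, Set.mem_ofPred_eq]
  constructor
  · rintro ⟨x, hx, rfl⟩
    exact ⟨x, hx, x, Eventually.of_forall fun j => (S j).refl x, rfl⟩
  · rintro ⟨a, ha, x, hxa, rfl⟩
    exact ⟨x, hY a ha x hxa, rfl⟩

def limit : r.Coarsening where
  R := limitRel S
  refl a := Eventually.of_forall fun i => (S i).refl a
  trans _ _ _ hab hbc := (hab.and hbc).mono fun i h => (S i).trans _ _ _ h.1 h.2
  rho_eq _ _ := rho_eq_of_antisymmRel_limitRel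
  exists_le_antisymmRel a b hba := by
    obtain ⟨i, hi⟩ := hba.exists
    obtain ⟨x, hxa, hxb⟩ := (S i).exists_le_antisymmRel a b hi
    exact ⟨x, hxa, antisymmRel_limitRel hS i hxb⟩
  real := real_limitRel hS

lemma le_limit (i : ι) : S i ≤ limit hS :=
  ⟨fun _ _ => antisymmRel_limitRel hS i, fun _ _ => exists_lift_limitRel hS i⟩

end Limit

variable (r) in
def base : r.Coarsening where
  R := r.le
  refl := r.le_refl
  trans := r.le_trans
  rho_eq a b h := by rw [r.le_antisymm a b h.1 h.2]
  exists_le_antisymmRel _ b h := ⟨b, h, r.le_refl b, r.le_refl b⟩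
  real := r.real

variable (r) in
theorem exists_isMax : ∃ M : r.Coarsening, IsMax M := by
  have : Nonempty r.Coarsening := ⟨base r⟩
  refine zorn_le_nonempty fun c hc ⟨S, hS⟩ => ?_
  have : Nonempty c := ⟨⟨S, hS⟩⟩
  have := hc.directedOn.isDirectedOrder
  have hmono : Monotone ((↑) : c → r.Coarsening) := Subtype.mono_coe _
  exact ⟨limit hmono, fun T hT => le_limit hmono ⟨T, hT⟩⟩

def quotient (S : r.Coarsening) : Realisation C where
  carrier := Quotient (AntisymmRel.setoid r.carrier S.R)
  le := Quotient.lift₂ S.R fun _ _ _ _ ha hb => propext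
    ⟨fun h => S.trans _ _ _ ha.2 (S.trans _ _ _ h hb.1),
      fun h => S.trans _ _ _ ha.1 (S.trans _ _ _ h hb.2)⟩
  le_refl := by
    rintro ⟨a⟩
    exact S.refl a
  le_trans := by
    rintro ⟨a⟩ ⟨b⟩ ⟨c⟩
    exact S.trans a b c
  le_antisymm := by
    rintro ⟨a⟩ ⟨b⟩ hab hba
    exact Quotient.sound ⟨hab, hba⟩
  finPast := by
    rintro ⟨a⟩
    refine ((r.finPast a).image (Quotient.mk _)).subset ?_
    rintro ⟨b⟩ hba
    obtain ⟨x, hxa, hxb⟩ := S.exists_le_antisymmRel a b hba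
    exact ⟨x, hxa, Quotient.sound hxb⟩
  ρ := Quotient.lift r.ρ S.rho_eq
  real x hx := by
    have h := S.real (Quotient.mk _ ⁻¹' x) fun a ha b hba => hx _ ha _ hba
    rwa [← Set.image_preimage_eq x Quotient.mk_surjective, Set.image_image]

lemma isDown_image_mk (S : r.Coarsening) {X : Set r.carrier} (hX : r.IsDown X) :
    S.quotient.IsDown (Quotient.mk _ '' X) := by
  rintro _ ⟨a, ha, rfl⟩ ⟨b⟩ hba
  obtain ⟨x, hxa, hxb⟩ := S.exists_le_antisymmRel a b hba
  exact ⟨x, hX a ha x hxa, Quotient.sound hxb⟩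

def toQuotient (S : r.Coarsening) : RealMap r S.quotient where
  f a := some (Quotient.mk _ a)
  surj q := q.inductionOn fun a => ⟨a, rfl⟩
  presDown X hX := by
    convert S.isDown_image_mk hX
    exact pimage_eq_image (fun _ => rfl) X
  commutes _ _ h := by
    cases Option.some.inj h
    rfl

lemma toQuotient_isTotal (S : r.Coarsening) : S.toQuotient.IsTotal := fun _ => ⟨_, rfl⟩

lemma antisymmRel_le_comp_iff {r' : Realisation C} {α : Type*} {h : α → r'.carrier} {a b : α} :
    AntisymmRel (fun a b => r'.le (h a) (h b)) a b ↔ h a = h b :=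
  ⟨fun hab => r'.le_antisymm _ _ hab.1 hab.2, fun hab => by
    simp only [AntisymmRel, hab]
    exact ⟨r'.le_refl _, r'.le_refl _⟩⟩

def comap (r' : Realisation C) (h : r.carrier → r'.carrier) (hsurj : Surjective h)
    (hdown : ∀ X, r.IsDown X → r'.IsDown (h '' X)) (hρ : ∀ a, r'.ρ (h a) = r.ρ a) :
    r.Coarsening where
  R a b := r'.le (h a) (h b)
  refl _ := r'.le_refl _
  trans _ _ _ := r'.le_trans _ _ _
  rho_eq a b hab := by rw [← hρ a, ← hρ b, antisymmRel_le_comp_iff.1 hab]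
  exists_le_antisymmRel a b hba := by
    obtain ⟨x, hxa, hxb⟩ := hdown {x | r.le x a} (fun _ hy _ hzy => r.le_trans _ _ _ hzy hy)
      (h a) ⟨a, r.le_refl a, rfl⟩ (h b) hba
    exact ⟨x, hxa, antisymmRel_le_comp_iff.2 hxb⟩
  real Y hY := by
    have hdownY : r'.IsDown (h '' Y) := by
      rintro _ ⟨y, hy, rfl⟩ z hz
      obtain ⟨x, rfl⟩ := hsurj z
      exact ⟨x, hY y hy x hz, rfl⟩
    have := r'.real _ hdownY
    rwa [Set.image_image, funext hρ] at this

theorem extremal_quotient_of_isMax {M : r.Coarsening} (hM : IsMax M) : M.quotient.Extremal := by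
  intro r' m hm
  choose g hg using hm
  have hsurj : Surjective g := fun b =>
    (m.surj b).imp fun q hq => Option.some.inj ((hg q).symm.trans hq)
  have hdown : ∀ Q, M.quotient.IsDown Q → r'.IsDown (g '' Q) := fun Q hQ =>
    pimage_eq_image hg Q ▸ m.presDown Q hQ
  set K := comap r' (g ∘ Quotient.mk _) (hsurj.comp Quotient.mk_surjective)
    (fun X hX => Set.image_comp g _ X ▸ hdown _ (M.isDown_image_mk hX))
    (fun a => (m.commutes _ _ (hg _)).symm)
  -- `K` is the kernel of `r → M.quotient → r'`; maximality of `M` makes `g` injective and monotone.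
  have hMK : M ≤ K := by
    refine ⟨fun a b hab => antisymmRel_le_comp_iff.2 (congrArg g (Quotient.sound hab)),
      fun a b hba => ?_⟩
    obtain ⟨q, hqa, hq⟩ := hdown {q | M.quotient.le q (Quotient.mk _ a)}
      (fun _ h1 _ h2 => M.quotient.le_trans _ _ _ h2 h1) _ ⟨_, M.quotient.le_refl _, rfl⟩ _ hba
    obtain ⟨x, rfl⟩ := Quotient.mk_surjective q
    exact ⟨x, hqa, antisymmRel_le_comp_iff.2 hq⟩
  have hKM := hM hMK
  refine m.isIso_of_injective_of_monotone hg ?_ ?_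
  · rintro ⟨a⟩ ⟨b⟩ hab
    exact Quotient.sound (hKM.1 a b (antisymmRel_le_comp_iff.2 hab))
  · rintro ⟨b⟩ ⟨a⟩ hba
    obtain ⟨x, hxa, hxb⟩ := hKM.2 a b hba
    have hxb' : (Quotient.mk _ x : M.quotient.carrier) = Quotient.mk _ b := Quotient.sound hxb
    change r'.le (g (Quotient.mk _ b)) (g (Quotient.mk _ a))
    rwa [← hxb']

end Coarsening
end Realisation

/-- Any realisation can be coarsened to an extremal realisation:
for any realisation there is an extremal realisation and a total map of
realisations to it. -/
theorem stmt0 {A : Type u} (C : ConfigFamily A) (r : Realisation C) :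
    ∃ (r' : Realisation C) (m : RealMap r r'), r'.Extremal ∧ m.IsTotal := by
  obtain ⟨M, hM⟩ := Realisation.Coarsening.exists_isMax r
  exact ⟨M.quotient, M.toQuotient, Realisation.Coarsening.extremal_quotient_of_isMax hM,
    M.toQuotient_isTotal⟩
end

section
/- Every countable configuration x of a family of configurations F has an injective extremal realisation: there exist an extremal realisation (R,≤),ρ of F with ρ injective and ρR = x. -/
universe u v w

/-!
Interleaving the prefixes of securing chains of all the events of the countable configuration
`x` enumerates `x` so that every initial segment is a configuration; this gives a causal order
on `x`, i.e. an injective realisation with image `x`. By Zorn's lemma there is a minimal causal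
order: the intersection of a chain of causal orders is causal, because the past of an event is
then the intersection of a chain of finite sets, hence one of them. A total map out of the
realisation of a minimal causal order is a bijection, since `ρ` is injective; the order pulled
back along it is again causal and, since maps preserve down-closed sets, lies below the minimal
one. So the map is an order isomorphism, hence an isomorphism of realisations.
-/

open Set Function

lemma List.setOf_mem_take_add_one_diff_subsingleton {α : Type*} (l : List α) (j : ℕ) :
    ({a | a ∈ l.take (j + 1)} \ {a | a ∈ l.take j}).Subsingleton := by
  rintro a ⟨ha, ha'⟩ b ⟨hb, hb'⟩
  simp only [mem_ofPred_eq, List.take_add_one, List.mem_append, Option.mem_toList]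
    at ha ha' hb hb'
  grind

namespace ConfigFamily

variable {A : Type u} (C : ConfigFamily A)

lemma empty_mem : (∅ : Set A) ∈ C.F := by
  obtain ⟨z, hz⟩ := C.nonempty
  simpa using C.unionClosed ∅ (empty_subset _) fun Y hY _ =>
    ⟨z, hz, fun y hy => absurd (hY hy) (notMem_empty y)⟩

variable {C}

lemma sUnion_mem {x : Set A} (hx : x ∈ C.F) {S : Set (Set A)} (hSF : S ⊆ C.F)
    (hSx : ∀ y ∈ S, y ⊆ x) : ⋃₀ S ∈ C.F :=
  C.unionClosed S hSF fun _ hY _ => ⟨x, hx, fun y hy => hSx y (hY hy)⟩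

lemma union_mem {x y z : Set A} (hx : x ∈ C.F) (hy : y ∈ C.F) (hz : z ∈ C.F)
    (hyx : y ⊆ x) (hzx : z ⊆ x) : y ∪ z ∈ C.F := by
  simpa using C.sUnion_mem hx (S := {y, z}) (pair_subset hy hz) (by simp [hyx, hzx])

lemma exists_securing_list {x : Set A} (hx : x ∈ C.F) {e : A} (he : e ∈ x) :
    ∃ l : List A, e ∈ l ∧ (∀ a ∈ l, a ∈ x) ∧ ∀ i, {a | a ∈ l.take i} ∈ C.F := by
  obtain ⟨l, hne, hlast, hlx, hpre⟩ := C.secured x hx e he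
  refine ⟨l, List.mem_of_getLast? hlast, hlx, fun i => ?_⟩
  rcases Nat.eq_zero_or_pos i with rfl | hi
  · simpa using C.empty_mem
  rcases le_total i l.length with hle | hle
  · exact hpre i hi hle
  · simpa [List.take_of_length_le hle] using
      hpre l.length (List.length_pos_iff.2 hne) le_rfl

/-- Prefixes of securing chains are enumerated through `Nat.pair`; the events are added one at
a time because the prefix of length `j` of a chain comes before that of length `j + 1`. -/
lemma exists_filtration {x : Set A} (hx : x ∈ C.F) (hcount : x.Countable) :
    ∃ Z : ℕ → Set A, Monotone Z ∧ Z 0 = ∅ ∧ (∀ m, (Z (m + 1) \ Z m).Subsingleton) ∧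
      (∀ m, Z m ∈ C.F) ∧ (∀ m, Z m ⊆ x) ∧ ∀ a ∈ x, ∃ m, a ∈ Z m := by
  rcases x.eq_empty_or_nonempty with rfl | hne
  · exact ⟨fun _ => ∅, monotone_const, rfl, by simp, fun _ => C.empty_mem,
      fun _ => subset_rfl, by simp⟩
  obtain ⟨e, rfl⟩ := hcount.exists_eq_range hne
  choose l hel hlx hlF using fun n => C.exists_securing_list hx (mem_range_self n)
  set P : ℕ → ℕ → Set A := fun n i => {a | a ∈ (l n).take i}
  have hPx : ∀ n i, P n i ⊆ range e := fun n i a ha => hlx n a (List.mem_of_mem_take ha)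
  set Q : ℕ → Set A := fun k => P k.unpair.1 k.unpair.2
  set Z := accumulate Q
  have hZ0 : Z 0 = ∅ := by simp [Z, Q, P]
  have hZsucc : ∀ m, Z (m + 1) = Z m ∪ Q (m + 1) := accumulate_succ Q
  have hPZ : ∀ n i m, Nat.pair n i ≤ m → P n i ⊆ Z m := fun n i m h => by
    have hPQ : P n i = Q (Nat.pair n i) := by simp [Q]
    exact hPQ ▸ subset_accumulate.trans (monotone_accumulate h)
  have hZx : ∀ m, Z m ⊆ range e := fun m a ha => by
    obtain ⟨k, -, hk⟩ := mem_accumulate.1 ha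
    exact hPx _ _ hk
  refine ⟨Z, monotone_accumulate, hZ0, fun m => ?_, fun m => ?_, hZx, ?_⟩
  · rw [hZsucc, union_sdiff_left]
    rcases hk : (m + 1).unpair with ⟨n, _ | j⟩
    · simp [Q, P, hk]
    · have hpair : Nat.pair n (j + 1) = m + 1 := by simpa [hk] using Nat.pair_unpair (m + 1)
      have hjm : Nat.pair n j ≤ m := by
        have := Nat.pair_lt_pair_right n (Nat.lt_add_one j)
        omega
      refine (List.setOf_mem_take_add_one_diff_subsingleton (l n) j).anti ?_
      simp only [Q, hk]
      exact sdiff_subset_sdiff_right (hPZ n j m hjm)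
  · induction m with
    | zero => exact hZ0 ▸ C.empty_mem
    | succ m ih => rw [hZsucc]; exact C.union_mem hx ih (hlF _ _) (hZx m) (hPx _ _)
  · rintro _ ⟨n, rfl⟩
    exact ⟨_, hPZ n (l n).length _ le_rfl (by simpa [P] using hel n)⟩

end ConfigFamily

lemma IsChain.sInter_mem_of_finite {α : Type*} {c : Set (Set α)} (hc : IsChain (· ⊆ ·) c)
    {s : Set α} (hs : s ∈ c) (hfin : s.Finite) : ⋂₀ c ∈ c := by
  obtain ⟨m, ⟨hmc, hms⟩, hmin⟩ :=
    (hfin.finite_subsets.subset fun t (ht : t ∈ c ∧ t ⊆ s) => ht.2).exists_minimal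
      ⟨s, hs, subset_rfl⟩
  suffices ⋂₀ c = m from this ▸ hmc
  refine (sInter_subset_of_mem hmc).antisymm (subset_sInter fun t ht => ?_)
  rcases hc.total hmc ht with h | h
  · exact h
  · exact hmin ⟨ht, h.trans hms⟩ h

lemma exists_injective_rank_of_filtration {A : Type u} {x : Set A} {Z : ℕ → Set A}
    (hmono : Monotone Z) (h0 : Z 0 = ∅) (hstep : ∀ m, (Z (m + 1) \ Z m).Subsingleton)
    (hcover : ∀ a ∈ x, ∃ m, a ∈ Z m) :
    ∃ rk : x → ℕ, Injective rk ∧ ∀ a m, rk a ≤ m ↔ (a : A) ∈ Z m := by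
  classical
  refine ⟨fun a => Nat.find (hcover a a.2), fun a b hab => ?_,
    fun a m => ⟨fun h => hmono h (Nat.find_spec (hcover a a.2)), fun h => Nat.find_le h⟩⟩
  have ha := Nat.find_spec (hcover a a.2)
  have hb := Nat.find_spec (hcover b b.2)
  obtain ⟨k, hk⟩ : ∃ k, Nat.find (hcover a a.2) = k + 1 :=
    Nat.exists_eq_add_one_of_ne_zero fun h => by simp [h, h0] at ha
  simp only at hab
  rw [hk] at ha
  rw [← hab, hk] at hb
  exact Subtype.val_injective <| hstep k ⟨ha, Nat.find_min _ (hk ▸ k.lt_add_one)⟩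
    ⟨hb, Nat.find_min _ (hab ▸ hk ▸ k.lt_add_one)⟩

section CausalOrder

variable {A : Type u} {C : ConfigFamily A} {x : Set A}

/-- The data of an injective realisation with image `x`, carried by `x` itself. -/
structure IsCausalOrder (C : ConfigFamily A) (x : Set A) (le : x → x → Prop) : Prop where
  refl : ∀ a, le a a
  trans : ∀ a b c, le a b → le b c → le a c
  antisymm : ∀ a b, le a b → le b a → a = b
  finite_past : ∀ b, {a | le a b}.Finite
  past_mem : ∀ b, Subtype.val '' {a | le a b} ∈ C.F

namespace IsCausalOrder

variable {le : x → x → Prop}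

def toRealisation (hx : x ∈ C.F) (h : IsCausalOrder C x le) : Realisation C where
  carrier := x
  le := le
  le_refl := h.refl
  le_trans := h.trans
  le_antisymm := h.antisymm
  finPast := h.finite_past
  ρ := Subtype.val
  real D hD := by
    have hD : D = ⋃ a ∈ D, {b | le b a} :=
      Subset.antisymm (fun a ha => mem_iUnion₂_of_mem ha (h.refl a))
        (iUnion₂_subset fun a ha b hb => hD a ha b hb)
    rw [hD, image_iUnion₂, ← sUnion_image]
    refine C.sUnion_mem hx ?_ ?_
    · rintro _ ⟨a, -, rfl⟩
      exact h.past_mem a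
    · rintro _ ⟨a, -, rfl⟩
      exact image_subset_iff.2 fun b _ => b.2

lemma of_injective_rank {rk : x → ℕ} (hrk : Injective rk)
    (hpast : ∀ b, Subtype.val '' {a | rk a ≤ rk b} ∈ C.F) :
    IsCausalOrder C x fun a b => rk a ≤ rk b where
  refl _ := le_rfl
  trans _ _ _ := le_trans
  antisymm _ _ h h' := hrk (le_antisymm h h')
  finite_past b := (finite_Iic (rk b)).preimage hrk.injOn
  past_mem := hpast

lemma exists_of_countable (hx : x ∈ C.F) (hcount : x.Countable) :
    ∃ le, IsCausalOrder C x le := by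
  obtain ⟨Z, hmono, h0, hstep, hZF, hZx, hcover⟩ := C.exists_filtration hx hcount
  obtain ⟨rk, hrk, hrkZ⟩ := exists_injective_rank_of_filtration hmono h0 hstep hcover
  refine ⟨_, of_injective_rank hrk fun b => ?_⟩
  convert hZF (rk b)
  ext c
  constructor
  · rintro ⟨a, ha, rfl⟩
    exact (hrkZ a _).1 ha
  · exact fun hc => ⟨⟨c, hZx _ hc⟩, (hrkZ _ _).2 hc, rfl⟩

lemma sInter_of_isChain {c : Set (Set (x × x))} (hc : IsChain (· ⊆ ·) c)
    (hcaus : ∀ R ∈ c, IsCausalOrder C x fun a b => (a, b) ∈ R) {R₀ : Set (x × x)}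
    (hR₀ : R₀ ∈ c) : IsCausalOrder C x fun a b => (a, b) ∈ ⋂₀ c where
  refl a R hR := (hcaus R hR).refl a
  trans a b d hab hbd R hR := (hcaus R hR).trans a b d (hab R hR) (hbd R hR)
  antisymm a b hab hba := (hcaus R₀ hR₀).antisymm a b (hab R₀ hR₀) (hba R₀ hR₀)
  finite_past b := ((hcaus R₀ hR₀).finite_past b).subset fun _ ha => ha R₀ hR₀
  past_mem b := by
    have hchain : IsChain (· ⊆ ·) ((fun R : Set (x × x) => {a | (a, b) ∈ R}) '' c) :=
      hc.image_of_map_rel _ _ _ fun _ _ h => ofPred_subset_ofPred.2 fun _ ha => h ha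
    obtain ⟨R, hR, hRb⟩ := hchain.sInter_mem_of_finite (mem_image_of_mem _ hR₀)
      ((hcaus R₀ hR₀).finite_past b)
    have hpast : {a | (a, b) ∈ ⋂₀ c} = {a | (a, b) ∈ R} := by
      rw [show {a | (a, b) ∈ R} = _ from hRb]
      ext
      simp
    exact hpast ▸ (hcaus R hR).past_mem b

lemma exists_minimal (hx : x ∈ C.F) (hcount : x.Countable) :
    ∃ R : Set (x × x), Minimal (fun R => IsCausalOrder C x fun a b => (a, b) ∈ R) R := by
  obtain ⟨le, hle⟩ := exists_of_countable hx hcount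
  obtain ⟨R, -, hR⟩ := zorn_superset_nonempty {R | IsCausalOrder C x fun a b => (a, b) ∈ R}
    (fun c hcS hc ⟨_, hR₀⟩ =>
      ⟨⋂₀ c, sInter_of_isChain hc hcS hR₀, fun _ => sInter_subset_of_mem⟩)
    {p | le p.1 p.2} hle
  exact ⟨R, hR⟩

lemma comap (r : Realisation C) {f : x → r.carrier} (hf : Surjective f)
    (hρ : ∀ a, r.ρ (f a) = a) : IsCausalOrder C x fun a b => r.le (f a) (f b) := by
  have hinj : Injective f := fun a b h => Subtype.val_injective <| by rw [← hρ a, h, hρ b]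
  refine ⟨fun _ => r.le_refl _, fun _ _ _ => r.le_trans _ _ _,
    fun _ _ h h' => hinj (r.le_antisymm _ _ h h'),
    fun b => (r.finPast (f b)).preimage hinj.injOn, fun b => ?_⟩
  convert r.real {y | r.le y (f b)} fun _ ha _ hc => r.le_trans _ _ _ hc ha
  ext c
  constructor
  · rintro ⟨a, ha, rfl⟩
    exact ⟨f a, ha, hρ a⟩
  · rintro ⟨y, hy, rfl⟩
    obtain ⟨a, rfl⟩ := hf y
    exact ⟨a, hy, (hρ a).symm⟩

end IsCausalOrder

namespace RealMap

variable {r r' : Realisation C}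

lemma exists_le_apply_eq (m : RealMap r r') {b : r.carrier} {a' b' : r'.carrier}
    (hb : m.f b = some b') (hab : r'.le a' b') : ∃ a, r.le a b ∧ m.f a = some a' :=
  m.presDown {a | r.le a b} (fun _ ha _ hc => r.le_trans _ _ _ hc ha) b' ⟨b, r.le_refl b, hb⟩
    a' hab

lemma isIso_of_bijective (m : RealMap r r') {f : r.carrier → r'.carrier}
    (hmf : ∀ a, m.f a = some (f a)) (hf : Bijective f)
    (hmono : ∀ a b, r.le a b → r'.le (f a) (f b)) : m.IsIso := by
  set e := Equiv.ofBijective f hf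
  have hfe : ∀ b, f (e.symm b) = b := e.apply_symm_apply
  refine ⟨⟨fun b => some (e.symm b), fun a => ⟨f a, by simp [e]⟩, ?_, ?_⟩,
    fun a b => ?_⟩
  · rintro D hD a' ⟨b, hb, hba'⟩ a hab
    obtain rfl : e.symm b = a' := Option.some_injective _ hba'
    refine ⟨f a, hD b hb _ ?_, by simp [e]⟩
    simpa only [hfe] using hmono a _ hab
  · rintro b a hba
    obtain rfl : e.symm b = a := Option.some_injective _ hba
    rw [m.commutes _ _ (hmf _), hfe]
  · rw [hmf, Option.some_inj, Option.some_inj, Equiv.symm_apply_eq]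
    exact eq_comm

end RealMap

namespace IsCausalOrder

theorem extremal_toRealisation (hx : x ∈ C.F) {R : Set (x × x)}
    (hR : Minimal (fun R => IsCausalOrder C x fun a b => (a, b) ∈ R) R) :
    (hR.prop.toRealisation hx).Extremal := by
  intro r' m hm
  choose f hf using hm
  have hρ : ∀ a : x, r'.ρ (f a) = a := fun a => (m.commutes a _ (hf a)).symm
  have hsurj : Surjective f := fun b =>
    (m.surj b).imp fun a ha => Option.some_injective _ ((hf a).symm.trans ha)
  have hinj : Injective f := fun a b h => Subtype.val_injective <| by rw [← hρ a, h, hρ b]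
  have hreflect : ∀ a b, r'.le (f a) (f b) → (a, b) ∈ R := by
    intro a b hab
    obtain ⟨d, hdb, hd⟩ := m.exists_le_apply_eq (hf b) hab
    rwa [hinj (Option.some_injective _ ((hf d).symm.trans hd))] at hdb
  have hRf : R ⊆ {p | r'.le (f p.1) (f p.2)} :=
    hR.2 (comap r' hsurj hρ) fun p hp => hreflect p.1 p.2 hp
  exact m.isIso_of_bijective hf ⟨hinj, hsurj⟩ fun a b hab => hRf hab

end IsCausalOrder

end CausalOrder

/-- Every countable configuration of a family of configurations has an
injective extremal realisation with image the configuration. -/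
theorem stmt1 {A : Type u} (C : ConfigFamily A) (x : Set A) (hx : x ∈ C.F)
    (hcount : x.Countable) :
    ∃ r : Realisation C, r.Extremal ∧ Function.Injective r.ρ ∧ Set.range r.ρ = x := by
  obtain ⟨R, hR⟩ := IsCausalOrder.exists_minimal hx hcount
  exact ⟨hR.prop.toRealisation hx, IsCausalOrder.extremal_toRealisation hx hR,
    Subtype.val_injective, Subtype.range_val⟩
end

section
/- Let ρ be a causal realisation of a family of configurations F with carrier (R,≤) and let f₁ : ρ → ρ₀ be a projection whose carrier R₀ is not a down-closed subset of R. Then f₁ factors as f₁ = g₁ ∘ g₂ where g₂ : ρ → ρ' is a total map of realisations that is not an isomorphism and g₁ : ρ' → ρ₀ is a projection. -/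
universe u v w

/-! Write `V` for the image of `R₀` in `R`, and weaken the order of `R` by removing every
relation `b ≤ a` with `b ∉ V` and `a ∈ V`. The identity `R → R'` is a total map, and it is not
an isomorphism because `V` is not down-closed; `R₀` still sits in `R'` with its own order, so the
projection factors through `R'`. That `R'` is a realisation: for `x` down-closed in `R'`, `ρ x` is
the union of `ρ (x ∩ V)`, a configuration since `x ∩ V` is down-closed in `R₀`, and of the `ρ [a]`
for `a ∈ x \ V`; all of them lie in the configuration `ρ (↓x)`, so their union is one too. -/

section Factorisation

variable {A : Type u} {C : ConfigFamily A}

namespace ConfigFamily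

theorem sUnion_mem_of_forall_subset (C : ConfigFamily A) {X : Set (Set A)} (hX : X ⊆ C.F)
    {z : Set A} (hz : z ∈ C.F) (hXz : ∀ y ∈ X, y ⊆ z) : ⋃₀ X ∈ C.F :=
  C.unionClosed X hX fun _ hY _ => ⟨z, hz, fun y hy => hXz y (hY hy)⟩

end ConfigFamily

namespace Realisation

variable (r : Realisation C)

theorem isDown_setOf_le (a : r.carrier) : r.IsDown {b | r.le b a} :=
  fun _ hc _ hbc => r.le_trans _ _ _ hbc hc

theorem isDown_downClosure (x : Set r.carrier) : r.IsDown {b | ∃ c ∈ x, r.le b c} :=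
  fun _ ⟨c, hc, hac⟩ _ hba => ⟨c, hc, r.le_trans _ _ _ hba hac⟩

def RealOn (V : Set r.carrier) : Prop :=
  ∀ y ⊆ V, (∀ a ∈ y, ∀ b ∈ V, r.le b a → b ∈ y) → r.ρ '' y ∈ C.F

def CutLe (V : Set r.carrier) (a b : r.carrier) : Prop :=
  r.le a b ∧ (b ∈ V → a ∈ V)

variable {r}

theorem CutLe.trans {V : Set r.carrier} {a b c : r.carrier} (hab : r.CutLe V a b)
    (hbc : r.CutLe V b c) : r.CutLe V a c :=
  ⟨r.le_trans _ _ _ hab.1 hbc.1, hab.2 ∘ hbc.2⟩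

theorem image_mem_of_cutLe_down {V : Set r.carrier} (hV : r.RealOn V) {x : Set r.carrier}
    (hx : ∀ a ∈ x, ∀ b, r.CutLe V b a → b ∈ x) : r.ρ '' x ∈ C.F := by
  have hsplit : x = (x ∩ V) ∪ ⋃ a ∈ x \ V, {b | r.le b a} := by
    refine subset_antisymm (fun a ha => ?_) (Set.union_subset Set.inter_subset_left ?_)
    · by_cases haV : a ∈ V
      · exact Or.inl ⟨ha, haV⟩
      · exact Or.inr (Set.mem_biUnion ⟨ha, haV⟩ (r.le_refl a))
    · exact Set.iUnion₂_subset fun a ha b hba => hx a ha.1 b ⟨hba, fun h => absurd h ha.2⟩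
  have hxV : r.ρ '' (x ∩ V) ∈ C.F :=
    hV _ Set.inter_subset_right fun a ha b hbV hba => ⟨hx a ha.1 b ⟨hba, fun _ => hbV⟩, hbV⟩
  have hbound : ∀ y ⊆ x, r.ρ '' y ⊆ r.ρ '' {b | ∃ c ∈ x, r.le b c} :=
    fun y hy => Set.image_mono fun b hb => ⟨b, hy hb, r.le_refl b⟩
  rw [hsplit, Set.image_union, Set.image_iUnion₂, ← Set.sUnion_image, ← Set.sUnion_insert]
  refine C.sUnion_mem_of_forall_subset ?_ (r.real _ (r.isDown_downClosure x)) ?_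
  · rintro _ (rfl | ⟨a, -, rfl⟩)
    exacts [hxV, r.real _ (r.isDown_setOf_le a)]
  · rintro _ (rfl | ⟨a, ha, rfl⟩)
    · exact hbound _ Set.inter_subset_left
    · exact Set.image_mono fun b hba => ⟨a, ha.1, hba⟩

variable (r) in
def cut (V : Set r.carrier) (hV : r.RealOn V) : Realisation C where
  carrier := r.carrier
  le := r.CutLe V
  le_refl a := ⟨r.le_refl a, id⟩
  le_trans _ _ _ := CutLe.trans
  le_antisymm a b hab hba := r.le_antisymm a b hab.1 hba.1
  finPast e := (r.finPast e).subset fun _ hb => hb.1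
  ρ := r.ρ
  real _ := image_mem_of_cutLe_down hV

variable (r) in
def toCut (V : Set r.carrier) (hV : r.RealOn V) : RealMap r (r.cut V hV) where
  f := some
  surj b := ⟨b, rfl⟩
  presDown x hx a ha b hba := by
    obtain ⟨a, ha, ⟨⟩⟩ := ha
    exact ⟨b, hx a ha b hba.1, rfl⟩
  commutes _ _ h := by cases Option.some_injective _ h; rfl

theorem toCut_isTotal (V : Set r.carrier) (hV : r.RealOn V) : (r.toCut V hV).IsTotal :=
  fun a => ⟨a, rfl⟩

theorem not_isIso_toCut {V : Set r.carrier} (hV : r.RealOn V) (hVdown : ¬ r.IsDown V) :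
    ¬ (r.toCut V hV).IsIso := by
  rintro ⟨m, hm⟩
  obtain ⟨a, haV, b, hba, hbV⟩ : ∃ a ∈ V, ∃ b, r.le b a ∧ b ∉ V := by
    simpa [IsDown] using hVdown
  have hm_some : m.f = some := funext fun c => (hm c c).mp rfl
  have hdown := m.presDown {c | r.CutLe V c a} fun _ hc _ hdc => CutLe.trans hdc hc
  rw [hm_some] at hdown
  obtain ⟨b, hb, ⟨⟩⟩ := hdown a ⟨a, ⟨r.le_refl a, id⟩, rfl⟩ b hba
  exact hbV (hb.2 haV)

end Realisation

namespace RealMap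

variable {r r₀ : Realisation C} {m : RealMap r r₀} {g : r₀.carrier → r.carrier}

theorem IsProjectionVia.realOn_range (hm : m.IsProjectionVia g) : r.RealOn (Set.range g) := by
  obtain ⟨-, hle, hρ, -⟩ := hm
  intro y hyg hy
  have hdown : r₀.IsDown {c | g c ∈ y} :=
    fun c hc d hdc => hy (g c) hc (g d) ⟨d, rfl⟩ ((hle d c).mp hdc)
  have hyimage : y = g '' {c | g c ∈ y} :=
    subset_antisymm (fun a ha => by obtain ⟨c, rfl⟩ := hyg ha; exact ⟨c, ha, rfl⟩)
      (Set.image_subset_iff.mpr fun _ => id)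
  rw [hyimage, Set.image_image, ← funext hρ]
  exact r₀.real _ hdown

def fromCut (hm : m.IsProjectionVia g) : RealMap (r.cut _ hm.realOn_range) r₀ where
  f := m.f
  surj := m.surj
  presDown x hx c hc d hdc := by
    obtain ⟨-, hle, -, hf⟩ := id hm
    obtain ⟨_, hax, hac⟩ := hc
    obtain rfl := (hf _ c).mp hac
    exact ⟨g d, hx (g c) hax (g d) ⟨(hle d c).mp hdc, fun _ => ⟨d, rfl⟩⟩, (hf (g d) d).mpr rfl⟩
  commutes := m.commutes

theorem isProjectionVia_fromCut (hm : m.IsProjectionVia g) :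
    (fromCut hm).IsProjectionVia g := by
  obtain ⟨hinj, hle, hρ, hf⟩ := hm
  exact ⟨hinj, fun a b => (hle a b).trans ⟨fun h => ⟨h, fun _ => ⟨a, rfl⟩⟩, And.left⟩, hρ, hf⟩

theorem compEq_toCut_fromCut (hm : m.IsProjectionVia g) :
    CompEq (r.toCut _ hm.realOn_range) (fromCut hm) m :=
  fun a _ => ⟨fun h => ⟨a, rfl, h⟩, fun ⟨_, hab, hbc⟩ => Option.some_injective _ hab ▸ hbc⟩

end RealMap

end Factorisation

/-- A projection whose carrier is not down-closed factors as a non-isomorphism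
total map followed by a projection. -/
theorem stmt3 {A : Type u} (C : ConfigFamily A) (r r₀ : Realisation C)
    (f₁ : RealMap r r₀) (g : r₀.carrier → r.carrier) (hg : f₁.IsProjectionVia g)
    (hnotdown : ¬ r.IsDown (Set.range g)) :
    ∃ (r' : Realisation C) (g₂ : RealMap r r') (g₁ : RealMap r' r₀),
      g₂.IsTotal ∧ ¬ g₂.IsIso ∧ g₁.IsProjection ∧ CompEq g₂ g₁ f₁ :=
  ⟨_, r.toCut _ hg.realOn_range, RealMap.fromCut hg, Realisation.toCut_isTotal _ _,
    Realisation.not_isIso_toCut _ hnotdown, ⟨g, RealMap.isProjectionVia_fromCut hg⟩,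
    RealMap.compEq_toCut_fromCut hg⟩
end

section
/- If ρ is an extremal realisation of a family of configurations F and f : ρ → ρ' is a map of realisations, then ρ' is extremal and the inverse relation g = f⁻¹ is a rigid embedding from the carrier (R',≤') of ρ' to the carrier (R,≤) of ρ, i.e. g is an injective order-preserving total function satisfying g[r'] = [g(r')] for all r' ∈ R' (where [r] denotes the down-closure of r), such that ρ' = ρ ∘ g. -/
universe u v w

/-!
Extend a map `f : ρ → ρ'` by the identity outside its domain: glue to `ρ'` the events of `ρ`
where `f` is undefined, each placed above the images of its predecessors. The extended map is
total, hence an isomorphism when `ρ` is extremal. Its inverse shows that `f` is injective on its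
domain, and that this domain is down-closed with `f` monotone on it, so that `f⁻¹` is a rigid
embedding. Applying this to composites `f ; m` with `m` total shows that `ρ'` is extremal.
-/

variable {A : Type u} {C : ConfigFamily A}

theorem ConfigFamily.union_mem_s5 (C : ConfigFamily A) {x y z : Set A} (hx : x ∈ C.F)
    (hy : y ∈ C.F) (hz : z ∈ C.F) (hxz : x ⊆ z) (hyz : y ⊆ z) : x ∪ y ∈ C.F := by
  rw [← Set.sUnion_pair]
  refine C.unionClosed _ ?_ fun Y hY _ => ⟨z, hz, fun w hw => ?_⟩
  · rintro w (rfl | rfl) <;> assumption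
  · rcases hY hw with rfl | rfl <;> assumption

namespace RealMap

variable {r r' r'' : Realisation C}

theorem exists_le_map_eq_some (f : RealMap r r') {a : r.carrier} {b b' : r'.carrier}
    (hab : f.f a = some b) (hb' : r'.le b' b) : ∃ c, r.le c a ∧ f.f c = some b' :=
  f.presDown _ (fun _ hu _ hv => r.le_trans _ _ _ hv hu) b ⟨a, r.le_refl a, hab⟩ b' hb'

theorem IsIso.eq_of_map_eq_some {m : RealMap r r'} (hm : m.IsIso) {a a' : r.carrier}
    {b : r'.carrier} (ha : m.f a = some b) (ha' : m.f a' = some b) : a = a' := by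
  obtain ⟨m', hm'⟩ := hm
  exact Option.some_inj.mp (((hm' a b).mp ha).symm.trans ((hm' a' b).mp ha'))

theorem IsIso.exists_map_eq_some_le {m : RealMap r r'} (hm : m.IsIso) {a c : r.carrier}
    {b : r'.carrier} (hab : m.f a = some b) (hca : r.le c a) :
    ∃ b', r'.le b' b ∧ m.f c = some b' := by
  obtain ⟨m', hm'⟩ := hm
  obtain ⟨b', hb', hm'b'⟩ := m'.exists_le_map_eq_some ((hm' a b).mp hab) hca
  exact ⟨b', hb', (hm' c b').mpr hm'b'⟩

def comp (m₁ : RealMap r r') (m₂ : RealMap r' r'') : RealMap r r'' where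
  f a := (m₁.f a).bind m₂.f
  surj c := by
    obtain ⟨b, hb⟩ := m₂.surj c
    obtain ⟨a, ha⟩ := m₁.surj b
    exact ⟨a, by rw [ha, Option.bind_some, hb]⟩
  presDown x hx := by
    have himage : pimage (fun a => (m₁.f a).bind m₂.f) x = pimage m₂.f (pimage m₁.f x) := by
      ext c
      simp only [pimage, Option.bind_eq_some_iff, Set.mem_ofPred_eq]
      constructor
      · rintro ⟨a, ha, b, hb, hbc⟩
        exact ⟨b, ⟨a, ha, hb⟩, hbc⟩
      · rintro ⟨b, ⟨a, ha, hb⟩, hbc⟩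
        exact ⟨a, ha, b, hb, hbc⟩
    rw [himage]
    exact m₂.presDown _ (m₁.presDown _ hx)
  commutes a c h := by
    obtain ⟨b, hb, hbc⟩ := Option.bind_eq_some_iff.mp h
    rw [m₁.commutes a b hb, m₂.commutes b c hbc]

theorem compEq_comp (m₁ : RealMap r r') (m₂ : RealMap r' r'') :
    CompEq m₁ m₂ (m₁.comp m₂) :=
  fun _ _ => Option.bind_eq_some_iff

variable (f : RealMap r r')

abbrev ExtCarrier : Type u := r'.carrier ⊕ {v : r.carrier // f.f v = none}

def extendFun (a : r.carrier) : f.ExtCarrier :=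
  match h : f.f a with
  | some b => .inl b
  | none => .inr ⟨a, h⟩

def ExtLe : f.ExtCarrier → f.ExtCarrier → Prop
  | .inl b, .inl b' => r'.le b b'
  | .inl b, .inr v => ∃ w, r.le w v.1 ∧ f.f w = some b
  | .inr u, .inr v => r.le u.1 v.1
  | .inr _, .inl _ => False

variable {f}

theorem extendFun_eq_inl {a : r.carrier} {b : r'.carrier} :
    f.extendFun a = .inl b ↔ f.f a = some b := by
  unfold extendFun
  split <;> simp_all

theorem extendFun_eq_inr {a : r.carrier} {v : {v : r.carrier // f.f v = none}} :
    f.extendFun a = .inr v ↔ v.1 = a := by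
  unfold extendFun
  split
  · rename_i h
    exact ⟨fun h' => (nomatch h'), fun hv => by simp [← hv, v.2] at h⟩
  · exact ⟨fun h => by cases h; rfl, fun h => by cases v; subst h; rfl⟩

theorem extLe_extendFun_inr {u : r.carrier} {v : {v : r.carrier // f.f v = none}}
    (huv : r.le u v.1) : f.ExtLe (f.extendFun u) (.inr v) := by
  rcases h : f.extendFun u with b | w
  · exact ⟨u, huv, extendFun_eq_inl.mp h⟩
  · obtain rfl := extendFun_eq_inr.mp h
    exact huv

theorem elim_ρ_extendFun (a : r.carrier) :
    Sum.elim r'.ρ (fun v : {v // f.f v = none} => r.ρ v.1) (f.extendFun a) = r.ρ a := by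
  rcases h : f.extendFun a with b | v
  · exact (f.commutes a b (extendFun_eq_inl.mp h)).symm
  · rw [← extendFun_eq_inr.mp h]
    rfl

theorem exists_le_extendFun_eq {a : r.carrier} {ξ : f.ExtCarrier}
    (hξ : f.ExtLe ξ (f.extendFun a)) : ∃ c, r.le c a ∧ f.extendFun c = ξ := by
  rcases h : f.extendFun a with b | v <;> rw [h] at hξ
  · rcases ξ with b' | _
    · obtain ⟨c, hca, hc⟩ := f.exists_le_map_eq_some (extendFun_eq_inl.mp h) hξ
      exact ⟨c, hca, extendFun_eq_inl.mpr hc⟩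
    · exact hξ.elim
  · obtain rfl := extendFun_eq_inr.mp h
    rcases ξ with b' | u
    · obtain ⟨w, hw, hwb⟩ := hξ
      exact ⟨w, hw, extendFun_eq_inl.mpr hwb⟩
    · exact ⟨u.1, hξ, extendFun_eq_inr.mpr rfl⟩

variable (f)

def extension : Realisation C where
  carrier := f.ExtCarrier
  le := f.ExtLe
  le_refl
    | .inl b => r'.le_refl b
    | .inr v => r.le_refl v.1
  le_trans := by
    rintro (b₁ | u) (b₂ | v) (b₃ | w) h₁₂ h₂₃ <;>
      simp only [ExtLe] at h₁₂ h₂₃ ⊢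
    · exact r'.le_trans _ _ _ h₁₂ h₂₃
    · obtain ⟨w₂, hw₂, hfw₂⟩ := h₂₃
      obtain ⟨w₁, hw₁, hfw₁⟩ := f.exists_le_map_eq_some hfw₂ h₁₂
      exact ⟨w₁, r.le_trans _ _ _ hw₁ hw₂, hfw₁⟩
    · obtain ⟨w₁, hw₁, hfw₁⟩ := h₁₂
      exact ⟨w₁, r.le_trans _ _ _ hw₁ h₂₃, hfw₁⟩
    · exact r.le_trans _ _ _ h₁₂ h₂₃
  le_antisymm := by
    rintro (b | u) (b' | v) h h' <;> simp only [ExtLe] at h h'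
    · rw [r'.le_antisymm _ _ h h']
    · rw [Subtype.ext (r.le_antisymm _ _ h h')]
  finPast
    | .inl b => ((r'.finPast b).image Sum.inl).subset <| by
        rintro (b' | _) h
        · exact ⟨b', h, rfl⟩
        · exact h.elim
    | .inr v => ((r.finPast v.1).image f.extendFun).subset fun ξ hξ =>
        exists_le_extendFun_eq (a := v.1) (by rwa [extendFun_eq_inr.mpr rfl])
  ρ := Sum.elim r'.ρ fun v => r.ρ v.1
  real x hx := by
    set T : Set r.carrier := {u | ∃ v, .inr v ∈ x ∧ r.le u v.1}
    have himage : Sum.elim r'.ρ (fun v => r.ρ v.1) '' x =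
        r'.ρ '' {b | .inl b ∈ x} ∪ r.ρ '' T := by
      apply Set.Subset.antisymm
      · rintro _ ⟨b | v, hξ, rfl⟩
        · exact Or.inl ⟨b, hξ, rfl⟩
        · exact Or.inr ⟨v.1, ⟨v, hξ, r.le_refl _⟩, rfl⟩
      · rintro _ (⟨b, hb, rfl⟩ | ⟨u, ⟨v, hv, huv⟩, rfl⟩)
        · exact ⟨.inl b, hb, rfl⟩
        · exact ⟨f.extendFun u, hx _ hv _ (extLe_extendFun_inr huv), elim_ρ_extendFun u⟩
    rw [himage]
    refine C.union_mem_s5 (r'.real _ fun b hb b' hb' => hx _ hb _ hb')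
      (r.real T fun u ⟨v, hv, huv⟩ u' hu' => ⟨v, hv, r.le_trans _ _ _ hu' huv⟩)
      (r.real Set.univ fun _ _ _ _ => trivial) ?_ (Set.image_mono (Set.subset_univ T))
    rintro _ ⟨b, -, rfl⟩
    obtain ⟨a, ha⟩ := f.surj b
    exact ⟨a, trivial, f.commutes a b ha⟩

def toExtension : RealMap r f.extension where
  f a := some (f.extendFun a)
  surj
    | .inl b => (f.surj b).imp fun _ ha => congrArg some (extendFun_eq_inl.mpr ha)
    | .inr v => ⟨v.1, congrArg some (extendFun_eq_inr.mpr rfl)⟩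
  presDown x hx := by
    rintro _ ⟨a, ha, h⟩ ξ hξ
    obtain rfl := Option.some_inj.mp h
    obtain ⟨c, hca, rfl⟩ := exists_le_extendFun_eq hξ
    exact ⟨c, hx a ha c hca, rfl⟩
  commutes a ξ h := by
    obtain rfl := Option.some_inj.mp h
    exact (elim_ρ_extendFun a).symm

theorem toExtension_isTotal : f.toExtension.IsTotal := fun _ => ⟨_, rfl⟩

end RealMap

namespace Realisation.Extremal

variable {r r' : Realisation C}

theorem eq_of_map_eq_some (hr : r.Extremal) (f : RealMap r r') {a a' : r.carrier}
    {b : r'.carrier} (ha : f.f a = some b) (ha' : f.f a' = some b) : a = a' :=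
  (hr _ _ f.toExtension_isTotal).eq_of_map_eq_some
    (congrArg some (RealMap.extendFun_eq_inl.mpr ha))
    (congrArg some (RealMap.extendFun_eq_inl.mpr ha'))

theorem exists_map_eq_some_le (hr : r.Extremal) (f : RealMap r r') {a c : r.carrier}
    {b : r'.carrier} (hab : f.f a = some b) (hca : r.le c a) :
    ∃ b', r'.le b' b ∧ f.f c = some b' := by
  obtain ⟨ξ, hξ, hcξ⟩ := (hr _ _ f.toExtension_isTotal).exists_map_eq_some_le
    (congrArg some (RealMap.extendFun_eq_inl.mpr hab)) hca
  rcases ξ with b' | _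
  · exact ⟨b', hξ, RealMap.extendFun_eq_inl.mp (Option.some_inj.mp hcξ)⟩
  · exact hξ.elim

theorem exists_rigid_inverse (hr : r.Extremal) (f : RealMap r r') :
    ∃ g : r'.carrier → r.carrier, (∀ a b, f.f a = some b ↔ g b = a) ∧
      ∀ b, {c | ∃ b', r'.le b' b ∧ g b' = c} = {c | r.le c (g b)} := by
  choose g hg using f.surj
  have hf_iff : ∀ a b, f.f a = some b ↔ g b = a :=
    fun a b => ⟨fun ha => hr.eq_of_map_eq_some f (hg b) ha, fun h => h ▸ hg b⟩
  refine ⟨g, hf_iff, fun b => Set.Subset.antisymm ?_ fun c hc => ?_⟩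
  · rintro _ ⟨b', hb', rfl⟩
    obtain ⟨c, hc, hfc⟩ := f.exists_le_map_eq_some (hg b) hb'
    rwa [(hf_iff c b').mp hfc]
  · obtain ⟨b', hb', hfc⟩ := hr.exists_map_eq_some_le f (hg b) hc
    exact ⟨b', hb', (hf_iff c b').mp hfc⟩

theorem of_realMap (hr : r.Extremal) (f : RealMap r r') : r'.Extremal := by
  intro r'' m hm
  obtain ⟨g, hg, -⟩ := hr.exists_rigid_inverse f
  obtain ⟨g₂, hg₂, hrigid₂⟩ := hr.exists_rigid_inverse (f.comp m)
  have hfg : ∀ b, f.f (g b) = some b := fun b => (hg _ b).mpr rfl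
  have hm_iff : ∀ b c, m.f b = some c ↔ g₂ c = g b := by
    intro b c
    rw [← hg₂, RealMap.compEq_comp]
    refine ⟨fun h => ⟨b, hfg b, h⟩, ?_⟩
    rintro ⟨b', hb', h⟩
    rwa [Option.some_inj.mp ((hfg b).symm.trans hb')]
  have hg₂_down : ∀ y, r''.IsDown y → r.IsDown (g₂ '' y) := by
    rintro y hy _ ⟨c, hc, rfl⟩ a ha
    obtain ⟨c', hc', rfl⟩ : a ∈ {a | ∃ c', r''.le c' c ∧ g₂ c' = a} :=
      (hrigid₂ c).symm ▸ ha
    exact ⟨c', hy c hc c' hc', rfl⟩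
  refine ⟨⟨fun c => f.f (g₂ c), fun b => ?_, fun y hy => ?_, fun c b h => ?_⟩,
    fun b c => ?_⟩
  · obtain ⟨c, hc⟩ := hm b
    exact ⟨c, by rw [(hm_iff b c).mp hc, hfg]⟩
  · convert f.presDown _ (hg₂_down y hy) using 1
    ext b
    exact ⟨fun ⟨c, hc, h⟩ => ⟨g₂ c, ⟨c, hc, rfl⟩, h⟩,
      fun ⟨_, ⟨c, hc, rfl⟩, h⟩ => ⟨c, hc, h⟩⟩
  · rw [← f.commutes _ _ h, (f.comp m).commutes _ c ((hg₂ _ c).mpr rfl)]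
  · rw [hm_iff, hg, eq_comm]

end Realisation.Extremal

/-- Any map of realisations from an extremal realisation has extremal target
and its inverse relation is a rigid embedding of the target carrier into the
source carrier commuting with the realisations. -/
theorem stmt5 {A : Type u} (C : ConfigFamily A) (r r' : Realisation C)
    (hr : r.Extremal) (f : RealMap r r') :
    r'.Extremal ∧ ∃ g : r'.carrier → r.carrier,
      (∀ a b, f.f a = some b ↔ g b = a) ∧
      Function.Injective g ∧
      (∀ a b, r'.le a b → r.le (g a) (g b)) ∧
      (∀ b, {c | ∃ b', r'.le b' b ∧ g b' = c} = {c | r.le c (g b)}) ∧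
      (∀ b, r'.ρ b = r.ρ (g b)) := by
  obtain ⟨g, hg, hrigid⟩ := hr.exists_rigid_inverse f
  have hfg : ∀ b, f.f (g b) = some b := fun b => (hg _ b).mpr rfl
  refine ⟨hr.of_realMap f, g, hg, fun b b' h => ?_, fun b' b hb' => ?_, hrigid,
    fun b => (f.commutes _ _ (hfg b)).symm⟩
  · exact Option.some_inj.mp ((hfg b).symm.trans (h ▸ hfg b'))
  · exact (hrigid b).subset ⟨b', hb', rfl⟩
end

section
/- Let (R,≤),ρ be an extremal realisation of a family of configurations F. Then: (i) if r' ≤ r and ρ(r) = ρ(r') then r = r'; and (ii) if [r) = [r') and ρ(r) = ρ(r') then r = r', where [r) denotes [r] \ {r}, the set of strict predecessors of r. -/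
universe u v w

/-!
In an extremal realisation, an element `b` cannot carry the same event as an element `a`
with `b ≰ a` whose strict predecessors all lie below `b`. Otherwise, delete `b` and declare
`a` to lie below everything that was above `b`: this is again a realisation, because any
down-closed set that lost `b` still contains `a`, which carries the same event. Sending `b`
to `a` and fixing everything else is then a total map of realisations, and it is not
injective, so it cannot be an isomorphism. Both parts of the theorem are instances of this
with `a ≤ b`, respectively `[a) = [b)`.
-/

theorem RealMap.IsIso.injective {A : Type u} {C : ConfigFamily A} {r r' : Realisation C}
    {m : RealMap r r'} (hm : m.IsIso) : Function.Injective m.f := by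
  obtain ⟨m', hm'⟩ := hm
  intro a b hab
  obtain ⟨c, hc⟩ := m'.surj a
  have hca : m.f a = some c := (hm' a c).mpr hc
  exact Option.some_injective _ (hc.symm.trans ((hm' b c).mp (hab ▸ hca)))

namespace Realisation

variable {A : Type u} {C : ConfigFamily A} (r : Realisation C) {a b : r.carrier}

def mergeLE (a b : r.carrier) (c d : {c : r.carrier // c ≠ b}) : Prop :=
  r.le c d ∨ (r.le c a ∧ r.le b d)

theorem mergeLE_trans {c d e : {c : r.carrier // c ≠ b}} :
    r.mergeLE a b c d → r.mergeLE a b d e → r.mergeLE a b c e := by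
  rintro (h₁ | ⟨h₁, h₁'⟩) (h₂ | ⟨h₂, h₂'⟩)
  · exact Or.inl (r.le_trans _ _ _ h₁ h₂)
  · exact Or.inr ⟨r.le_trans _ _ _ h₁ h₂, h₂'⟩
  · exact Or.inr ⟨h₁, r.le_trans _ _ _ h₁' h₂⟩
  · exact Or.inr ⟨h₁, h₂'⟩

theorem mergeLE_antisymm (hba : ¬ r.le b a) {c d : {c : r.carrier // c ≠ b}} :
    r.mergeLE a b c d → r.mergeLE a b d c → c = d := by
  have hbca : ∀ {c d}, r.le b c → r.le c d → r.le d a → False := fun h₁ h₂ h₃ =>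
    hba (r.le_trans _ _ _ (r.le_trans _ _ _ h₁ h₂) h₃)
  rintro (h₁ | ⟨h₁, h₁'⟩) (h₂ | ⟨h₂, h₂'⟩)
  · exact Subtype.ext (r.le_antisymm _ _ h₁ h₂)
  · exact (hbca h₂' h₁ h₂).elim
  · exact (hbca h₁' h₂ h₁).elim
  · exact (hbca h₁' (r.le_refl _) h₂).elim

theorem finite_setOf_mergeLE (e : {c : r.carrier // c ≠ b}) :
    {d | r.mergeLE a b d e}.Finite := by
  refine (((r.finPast e.1).union (r.finPast a)).preimage Subtype.val_injective.injOn).subset ?_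
  rintro d (h | ⟨h, -⟩)
  exacts [Or.inl h, Or.inr h]

/-- The down-closure in `r` only adds `b`, and only when `a ∈ x`. -/
theorem image_downClosure_eq (hne : a ≠ b) (hρ : r.ρ a = r.ρ b)
    {x : Set {c : r.carrier // c ≠ b}} (hx : ∀ c ∈ x, ∀ d, r.mergeLE a b d c → d ∈ x) :
    r.ρ '' {e | ∃ c ∈ x, r.le e c} = (fun c => r.ρ c.1) '' x := by
  apply Set.Subset.antisymm
  · rintro _ ⟨e, ⟨c, hc, hec⟩, rfl⟩
    by_cases heb : e = b
    · subst heb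
      exact ⟨⟨a, hne⟩, hx c hc _ (Or.inr ⟨r.le_refl a, hec⟩), hρ⟩
    · exact ⟨⟨e, heb⟩, hx c hc _ (Or.inl hec), rfl⟩
  · rintro _ ⟨c, hc, rfl⟩
    exact ⟨c, ⟨c, hc, r.le_refl _⟩, rfl⟩

def merge (hne : a ≠ b) (hρ : r.ρ a = r.ρ b) (hba : ¬ r.le b a) : Realisation C where
  carrier := {c : r.carrier // c ≠ b}
  le := r.mergeLE a b
  le_refl c := Or.inl (r.le_refl c)
  le_trans _ _ _ := r.mergeLE_trans
  le_antisymm _ _ := r.mergeLE_antisymm hba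
  finPast := r.finite_setOf_mergeLE
  ρ c := r.ρ c
  real x hx := by
    rw [← r.image_downClosure_eq hne hρ hx]
    exact r.real _ fun e ⟨c, hc, hec⟩ d hde => ⟨c, hc, r.le_trans _ _ _ hde hec⟩

noncomputable def toMergeFun (hne : a ≠ b) (c : r.carrier) : {c : r.carrier // c ≠ b} :=
  open Classical in if h : c = b then ⟨a, hne⟩ else ⟨c, h⟩

theorem toMergeFun_of_ne (hne : a ≠ b) {c : r.carrier} (hc : c ≠ b) :
    r.toMergeFun hne c = ⟨c, hc⟩ :=
  dif_neg hc

theorem toMergeFun_eq_iff (hne : a ≠ b) {c : r.carrier} {d : {c : r.carrier // c ≠ b}} :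
    r.toMergeFun hne c = d ↔ d.1 = c ∨ (d.1 = a ∧ c = b) := by
  unfold toMergeFun
  split_ifs with h
  · subst h
    simp only [d.2, and_true, false_or, Subtype.ext_iff, eq_comm]
  · simp only [h, and_false, or_false, Subtype.ext_iff, eq_comm]

theorem mem_pimage_toMergeFun_of_mergeLE (hne : a ≠ b) (hab : ∀ d ∈ r.spred a, r.le d b)
    {x : Set r.carrier} (hx : r.IsDown x) :
    ∀ c ∈ pimage (fun c => some (r.toMergeFun hne c)) x, ∀ d, r.mergeLE a b d c →
      d ∈ pimage (fun c => some (r.toMergeFun hne c)) x := by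
  have mem_of_mem : ∀ d : {c : r.carrier // c ≠ b}, d.1 ∈ x →
      d ∈ pimage (fun c => some (r.toMergeFun hne c)) x := fun d hd =>
    ⟨d, hd, congrArg some (r.toMergeFun_of_ne hne d.2)⟩
  have mem_of_le_a : ∀ d : {c : r.carrier // c ≠ b}, r.le d a → b ∈ x →
      d ∈ pimage (fun c => some (r.toMergeFun hne c)) x := by
    intro d hda hbx
    by_cases hd : d.1 = a
    · exact ⟨b, hbx, congrArg some ((r.toMergeFun_eq_iff hne).mpr (Or.inr ⟨hd, rfl⟩))⟩
    · exact mem_of_mem d (hx b hbx d (hab d ⟨hda, hd⟩))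
  rintro c ⟨e, he, hec⟩ d hdc
  rcases (r.toMergeFun_eq_iff hne).mp (Option.some_injective _ hec) with hce | ⟨hca, rfl⟩
  · subst hce
    rcases hdc with hdc | ⟨hda, hbc⟩
    · exact mem_of_mem d (hx _ he d hdc)
    · exact mem_of_le_a d hda (hx _ he b hbc)
  · rcases hdc with hdc | ⟨hda, -⟩
    · exact mem_of_le_a d (hca ▸ hdc) he
    · exact mem_of_le_a d hda he

noncomputable def toMerge (hne : a ≠ b) (hρ : r.ρ a = r.ρ b) (hba : ¬ r.le b a)
    (hab : ∀ d ∈ r.spred a, r.le d b) : RealMap r (r.merge hne hρ hba) where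
  f c := some (r.toMergeFun hne c)
  surj d := ⟨d.1, congrArg some (r.toMergeFun_of_ne hne d.2)⟩
  presDown _ hx := r.mem_pimage_toMergeFun_of_mergeLE hne hab hx
  commutes c d hcd := by
    rcases (r.toMergeFun_eq_iff hne).mp (Option.some_injective _ hcd) with h | ⟨h, rfl⟩
    · exact congrArg r.ρ h.symm
    · exact hρ.symm.trans (congrArg r.ρ h.symm)

end Realisation

theorem Realisation.Extremal.le_of_forall_spred_le {A : Type u} {C : ConfigFamily A}
    {r : Realisation C} {a b : r.carrier} (hr : r.Extremal) (hρ : r.ρ a = r.ρ b)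
    (hab : ∀ d ∈ r.spred a, r.le d b) : r.le b a := by
  by_contra hba
  have hne : a ≠ b := fun h => hba (h ▸ r.le_refl a)
  let m := r.toMerge hne hρ hba hab
  have hm : m.IsIso := hr _ m fun c => ⟨_, rfl⟩
  have hmab : m.f a = m.f b := by
    simp only [m, Realisation.toMerge, Realisation.toMergeFun, dif_neg hne, dif_pos]
  exact hne (hm.injective hmab)

/-- For an extremal realisation: (i) comparable elements with equal images are
equal; (ii) elements with the same strict predecessors and equal images are
equal. -/
theorem stmt6 {A : Type u} (C : ConfigFamily A) (r : Realisation C)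
    (hr : r.Extremal) :
    (∀ a b, r.le a b → r.ρ b = r.ρ a → a = b) ∧
    (∀ a b, r.spred a = r.spred b → r.ρ a = r.ρ b → a = b) := by
  constructor
  · intro a b hab hρ
    refine r.le_antisymm _ _ hab (hr.le_of_forall_spred_le hρ.symm fun d hd => ?_)
    exact r.le_trans _ _ _ hd.1 hab
  · intro a b hsp hρ
    have hba := hr.le_of_forall_spred_le hρ fun d hd => (hsp ▸ hd : d ∈ r.spred b).1
    have hab := hr.le_of_forall_spred_le hρ.symm fun d hd => (hsp ▸ hd : d ∈ r.spred a).1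
    exact r.le_antisymm _ _ hab hba
end
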